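/- arXiv:1411.2402 — 5 statements merged into one kernel-verified Lean document; each statement's English description precedes it below -/
import Mathlib

section
/- Let M be a module over ℝ, α_a, α_b ∈ M, and f_a, f_b linear functionals with f_a(α_a) = 2, f_b(α_b) = 2, and let s_a, s_b be the associated reflections. Suppose f_a(α_b) ≤ -1 and f_b(α_a) ≤ -1. Then for all μ, ρ ∈ M with f_a(ρ) = 1 = f_b(ρ), f_a(μ) ≥ 0 and f_b(μ) ≥ 0, one has f_b(s_a(s_b(μ + ρ)) - ρ) ≥ f_a(μ) ≥ 0. -/
/-- if `f_a(α_b) ≤ -1` and `f_b(α_a) ≤ -1`, then for dominant `μ`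
one has `f_b(s_a(s_b(μ+ρ)) - ρ) ≥ f_a(μ) ≥ 0`. -/
theorem stmt_4 {M : Type*} [AddCommGroup M] [Module ℝ M]
    (αa αb : M) (fa fb : M →ₗ[ℝ] ℝ)
    (hfa : fa αa = 2) (hfb : fb αb = 2)
    (hab : fa αb ≤ -1) (hba : fb αa ≤ -1)
    (sa sb : M → M)
    (hsa : ∀ x, sa x = x - fa x • αa)
    (hsb : ∀ x, sb x = x - fb x • αb) :
    ∀ μ ρ : M, fa ρ = 1 → fb ρ = 1 → 0 ≤ fa μ → 0 ≤ fb μ →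
      fa μ ≤ fb (sa (sb (μ + ρ)) - ρ) ∧ 0 ≤ fa μ := by
  intro μ ρ h1 h2 h3 h4
  refine ⟨?_, h3⟩
  simp only [hsa, hsb, map_sub, map_add, map_smul, smul_eq_mul, hfa, hfb, h1, h2]
  nlinarith [mul_nonneg (neg_nonneg.2 (hab.trans (by norm_num))) (neg_nonneg.2 (hba.trans (by norm_num))), mul_le_mul_of_nonneg_left hba (by linarith : (0:ℝ) ≤ fa μ + 1), mul_le_mul_of_nonneg_right (mul_le_mul_of_nonpos_right hab (hba.trans (by norm_num))) (by linarith : (0:ℝ) ≤ fb μ + 1)]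
end

section
/- Let M be a module over ℝ, α_a, α_b ∈ M, and f_a, f_b linear functionals with f_a(α_a) = 2, f_b(α_b) = 2, and let s_a, s_b be the associated reflections. Let g : M →ₗ[ℝ] ℝ be any linear functional with g(α_a) ≤ 0, g(α_b) ≤ 0. Then for all μ, ρ ∈ M with f_a(ρ) = 1 = f_b(ρ), f_a(μ) ≥ 0, f_b(μ) ≥ 0, f_a(α_b) ≤ 0, and g(μ) ≥ 0, one has g(s_a(s_b(μ + ρ)) - ρ) ≥ 0. -/
/-- if `g(α_a) ≤ 0` and `g(α_b) ≤ 0`, then under dominance of `μ`,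
`f_a(α_b) ≤ 0` and `g(μ) ≥ 0`, one has `g(s_a(s_b(μ+ρ)) - ρ) ≥ 0`. -/
theorem stmt_5 {M : Type*} [AddCommGroup M] [Module ℝ M]
    (αa αb : M) (fa fb : M →ₗ[ℝ] ℝ)
    (hfa : fa αa = 2) (hfb : fb αb = 2)
    (sa sb : M → M)
    (hsa : ∀ x, sa x = x - fa x • αa)
    (hsb : ∀ x, sb x = x - fb x • αb)
    (g : M →ₗ[ℝ] ℝ) (hga : g αa ≤ 0) (hgb : g αb ≤ 0) :
    ∀ μ ρ : M, fa ρ = 1 → fb ρ = 1 → 0 ≤ fa μ → 0 ≤ fb μ → fa αb ≤ 0 → 0 ≤ g μ →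
      0 ≤ g (sa (sb (μ + ρ)) - ρ) := by
  intro μ ρ h1 h2 h3 h4 h5 h6
  simp only [hsa, hsb, map_sub, map_add, map_smul, smul_eq_mul, hfa, hfb, h1, h2]
  nlinarith [mul_nonneg h4 (neg_nonneg.2 h5), mul_nonneg (mul_nonneg h4 (neg_nonneg.2 h5)) (neg_nonneg.2 hga)]
end

section
/- Let M be a module over ℝ, (α_i)_{i ∈ I} a family of vectors, and (f_i)_{i ∈ I} linear functionals with f_i(α_i) = 2 for all i and f_i(α_j) ≤ 0 for all i ≠ j. Fix distinct indices a ≠ b with f_a(α_b) ≤ -1 and f_b(α_a) ≤ -1, and let μ, ρ ∈ M satisfy f_i(μ) ≥ 0 and f_i(ρ) = 1 for all i. Then for every i ∈ I: f_i(s_a(s_b(μ + ρ)) - ρ) < 0 if and only if i = a. -/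
/-- claim (1) of the Proposition in Appendix A: for non-orthogonal
distinct simple roots `α_a, α_b`, a simple coroot pairs negatively with
`s_a(s_b(μ+ρ)) - ρ` if and only if it is the coroot of `α_a`. -/
theorem stmt_6 {M : Type*} [AddCommGroup M] [Module ℝ M] {I : Type*}
    (α : I → M) (f : I → (M →ₗ[ℝ] ℝ))
    (hf : ∀ i, f i (α i) = 2)
    (hneg : ∀ i j, i ≠ j → f i (α j) ≤ 0)
    (a b : I) (hab : a ≠ b)
    (hab1 : f a (α b) ≤ -1) (hba1 : f b (α a) ≤ -1)
    (μ ρ : M) (hdom : ∀ i, 0 ≤ f i μ) (hρ : ∀ i, f i ρ = 1)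
    (sa sb : M → M)
    (hsa : ∀ x, sa x = x - f a x • α a)
    (hsb : ∀ x, sb x = x - f b x • α b) :
    ∀ i, f i (sa (sb (μ + ρ)) - ρ) < 0 ↔ i = a := by
  intro i
  have expand : f i (sa (sb (μ + ρ)) - ρ) =
      f i μ - (f b μ + 1) * f i (α b)
        - ((f a μ + 1) - (f b μ + 1) * f a (α b)) * f i (α a) := by
    rw [hsb, hsa]
    simp only [map_sub, map_add, map_smul, smul_eq_mul, hρ, hf]
    ring
  constructor
  · intro h
    by_contra hia
    rw [expand] at h
    obtain hib | hib := eq_or_ne i b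
    · rw [hib, hf b] at h
      nlinarith [hdom a, hdom b, mul_nonneg (by linarith : (0:ℝ) ≤ -(f b (α a)) - 1)
        (by linarith [hdom a] : (0:ℝ) ≤ f a μ + 1),
        mul_nonneg (by nlinarith : (0:ℝ) ≤ f b (α a) * f a (α b) - 1)
        (by linarith [hdom b] : (0:ℝ) ≤ f b μ + 1)]
    · have h1 := hneg i a hia
      have h2 := hneg i b hib
      nlinarith [hdom a, hdom b, hdom i,
        mul_nonneg (by linarith [hdom b] : (0:ℝ) ≤ f b μ + 1) (by linarith : (0:ℝ) ≤ -(f a (α b))),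
        mul_nonneg (by linarith [hdom b] : (0:ℝ) ≤ f b μ + 1) (by linarith : (0:ℝ) ≤ -(f i (α b))),
        mul_nonneg (by nlinarith [hdom a, hdom b] :
          (0:ℝ) ≤ (f a μ + 1) - (f b μ + 1) * f a (α b)) (by linarith : (0:ℝ) ≤ -(f i (α a)))]
  · intro hia
    rw [expand, hia, hf a]
    nlinarith [hdom a, hdom b,
      mul_nonneg (by linarith [hdom b] : (0:ℝ) ≤ f b μ + 1) (by linarith : (0:ℝ) ≤ -(f a (α b)))]
end

section
/- Let M be a module over ℝ, (α_i)_{i ∈ I} a family of vectors, and (f_i)_{i ∈ I} linear functionals with f_i(α_i) = 2 for all i and f_i(α_j) ≤ 0 for all i ≠ j. Fix distinct indices a ≠ b with f_a(α_b) = 0 and f_b(α_a) = 0, and let μ, ρ ∈ M satisfy f_i(μ) ≥ 0 and f_i(ρ) = 1 for all i. Then for every i ∈ I: f_i(s_a(s_b(μ + ρ)) - ρ) < 0 if and only if i = a or i = b. -/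
/-- claim (2) of the Proposition in Appendix A: for orthogonal
distinct simple roots `α_a, α_b`, a simple coroot pairs negatively with
`s_a(s_b(μ+ρ)) - ρ` if and only if it is the coroot of `α_a` or of `α_b`. -/
theorem stmt_7 {M : Type*} [AddCommGroup M] [Module ℝ M] {I : Type*}
    (α : I → M) (f : I → (M →ₗ[ℝ] ℝ))
    (hf : ∀ i, f i (α i) = 2)
    (hneg : ∀ i j, i ≠ j → f i (α j) ≤ 0)
    (a b : I) (hab : a ≠ b)
    (hab0 : f a (α b) = 0) (hba0 : f b (α a) = 0)
    (μ ρ : M) (hdom : ∀ i, 0 ≤ f i μ) (hρ : ∀ i, f i ρ = 1)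
    (sa sb : M → M)
    (hsa : ∀ x, sa x = x - f a x • α a)
    (hsb : ∀ x, sb x = x - f b x • α b) :
    ∀ i, f i (sa (sb (μ + ρ)) - ρ) < 0 ↔ (i = a ∨ i = b) := by
  intro i
  have key : f i (sa (sb (μ + ρ)) - ρ) =
      f i μ - (f b μ + 1) * f i (α b) - (f a μ + 1) * f i (α a) := by
    rw [hsb, hsa]
    simp [map_sub, map_add, map_smul, hρ, hab0, hba0]
    ring
  rw [key]
  constructor
  · intro h
    by_contra hc
    push_neg at hc
    obtain ⟨hia, hib⟩ := hc
    have h1 := hneg i a hia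
    have h2 := hneg i b hib
    have := hdom i
    have hbμ := hdom b
    have haμ := hdom a
    nlinarith
  · rintro (rfl | rfl)
    · rw [hf i, hab0]
      have := hdom i
      linarith
    · rw [hf i, hba0]
      have := hdom i
      linarith
end

section
/- Let 𝔨 and 𝔤 be Lie algebras over ℝ, 𝔥 a Lie subalgebra of 𝔨, 𝔭 a Lie subalgebra of 𝔤, φ : 𝔥 → 𝔤 a Lie algebra homomorphism with φ(𝔥) ⊆ 𝔭, and α : 𝔨 → 𝔤 a linear map such that: (i) α(h) = φ(h) for all h ∈ 𝔥; (ii) for every x ∈ 𝔨, α(x) ∈ 𝔭 if and only if x ∈ 𝔥, and for every g ∈ 𝔤 there exists x ∈ 𝔨 with g - α(x) ∈ 𝔭; (iii) α([h, x]) = [φ(h), α(x)] for all h ∈ 𝔥 and x ∈ 𝔨. Suppose A and B are complementary submodules of 𝔤 (𝔤 = A ⊕ B as vector spaces) with [φ(h), A] ⊆ A and [φ(h), B] ⊆ B for all h ∈ 𝔥, B ⊆ 𝔭, and φ(𝔥) ⊆ A, and let π_A be the projection onto A along B. Then the linear map α' := π_A ∘ α satisfies the same three properties (i), (ii), (iii);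 moreover α'(x) - α(x) ∈ 𝔭 for every x ∈ 𝔨. -/
/-- truncating an extension datum `(α, φ)` of `(𝔨, 𝔥)` to `(𝔤, 𝔭)`
by the projection onto an `𝔥`-invariant complement `A` along `B ⊆ 𝔭` again yields
an extension datum, and the two maps agree modulo `𝔭`. -/
theorem stmt_13 {𝔨 𝔤 : Type*}
    [LieRing 𝔨] [LieAlgebra ℝ 𝔨] [LieRing 𝔤] [LieAlgebra ℝ 𝔤]
    (𝔥 : LieSubalgebra ℝ 𝔨) (𝔭 : LieSubalgebra ℝ 𝔤)
    (φ : 𝔥 →ₗ⁅ℝ⁆ 𝔤) (hφ𝔭 : ∀ h : 𝔥, φ h ∈ 𝔭)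
    (α : 𝔨 →ₗ[ℝ] 𝔤)
    (h1 : ∀ h : 𝔥, α h = φ h)
    (h2a : ∀ x : 𝔨, α x ∈ 𝔭 ↔ x ∈ 𝔥)
    (h2b : ∀ g : 𝔤, ∃ x : 𝔨, g - α x ∈ 𝔭)
    (h3 : ∀ (h : 𝔥) (x : 𝔨), α ⁅(h : 𝔨), x⁆ = ⁅φ h, α x⁆)
    (A B : Submodule ℝ 𝔤) (hAB : IsCompl A B)
    (hA : ∀ (h : 𝔥), ∀ a ∈ A, ⁅φ h, a⁆ ∈ A)
    (hB : ∀ (h : 𝔥), ∀ b ∈ B, ⁅φ h, b⁆ ∈ B)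
    (hB𝔭 : B ≤ 𝔭.toSubmodule)
    (hφA : ∀ h : 𝔥, φ h ∈ A)
    (π : 𝔤 →ₗ[ℝ] 𝔤) (hπA : ∀ a ∈ A, π a = a) (hπB : ∀ b ∈ B, π b = 0) :
    (∀ h : 𝔥, (π ∘ₗ α) h = φ h) ∧
    (∀ x : 𝔨, (π ∘ₗ α) x ∈ 𝔭 ↔ x ∈ 𝔥) ∧
    (∀ g : 𝔤, ∃ x : 𝔨, g - (π ∘ₗ α) x ∈ 𝔭) ∧
    (∀ (h : 𝔥) (x : 𝔨), (π ∘ₗ α) ⁅(h : 𝔨), x⁆ = ⁅φ h, (π ∘ₗ α) x⁆) ∧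
    (∀ x : 𝔨, (π ∘ₗ α) x - α x ∈ 𝔭) := by
  -- key decomposition facts: π g ∈ A and g - π g ∈ B for all g
  have key : ∀ g : 𝔤, π g ∈ A ∧ g - π g ∈ B := by
    intro g
    have hg : g ∈ A ⊔ B := by rw [hAB.sup_eq_top]; trivial
    obtain ⟨a, ha, b, hb, rfl⟩ := Submodule.mem_sup.1 hg
    have : π (a + b) = a := by rw [map_add, hπA a ha, hπB b hb, add_zero]
    rw [this]
    exact ⟨ha, by simpa using hb⟩
  have diff𝔭 : ∀ g : 𝔤, g - π g ∈ 𝔭 := fun g => hB𝔭 (key g).2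
  have last : ∀ x : 𝔨, (π ∘ₗ α) x - α x ∈ 𝔭 := by
    intro x
    have := 𝔭.toSubmodule.neg_mem (diff𝔭 (α x))
    simpa [neg_sub] using this
  refine ⟨?_, ?_, ?_, ?_, last⟩
  · intro h
    simp only [LinearMap.comp_apply, h1 h]
    exact hπA _ (hφA h)
  · intro x
    have : (π ∘ₗ α) x ∈ 𝔭 ↔ α x ∈ 𝔭 := by
      constructor
      · intro hx
        have := 𝔭.toSubmodule.sub_mem hx (last x)
        simpa using this
      · intro hx
        have := 𝔭.toSubmodule.add_mem hx (last x)
        simpa using this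
    rw [this, h2a]
  · intro g
    obtain ⟨x, hx⟩ := h2b g
    refine ⟨x, ?_⟩
    have := 𝔭.toSubmodule.sub_mem hx (last x)
    simpa [sub_sub_sub_cancel_right] using this
  · intro h x
    simp only [LinearMap.comp_apply, h3 h x]
    obtain ⟨a, ha, b, hb, hab⟩ := Submodule.mem_sup.1
      (by rw [hAB.sup_eq_top]; trivial : α x ∈ A ⊔ B)
    have hπαx : π (α x) = a := by
      rw [← hab, map_add, hπA a ha, hπB b hb, add_zero]
    rw [hπαx, ← hab, lie_add, map_add, hπA _ (hA h a ha), hπB _ (hB h b hb), add_zero]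
end
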